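/- arXiv:1602.08613 — 3 statements merged into one kernel-verified Lean document; each statement's English description precedes it below -/
import Mathlib

section
/- Let A be a real symmetric n×n matrix, Y ∈ ℝⁿ, τ ∈ ℝ, z ∈ ℂ with Im z ≠ 0, and set G^0 = (A - zI)⁻¹, A_τ = 1 + τ(G^0 Y, Y), B_τ = τ((G^0)² Y, Y). Then |B_τ / A_τ| ≤ 1/|Im z|. -/
/-!
Diagonalising `A` by a unitary `U` turns both quadratic forms into sums over the eigenvalues
`λⱼ` with weights `wⱼ = |(U* Y)ⱼ|² ≥ 0`: `(G⁰Y, Y) = ∑ wⱼ / (λⱼ - z)` and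
`((G⁰)²Y, Y) = ∑ wⱼ / (λⱼ - z)²`. With `S = ∑ wⱼ / |λⱼ - z|²` one has `Im A_τ = τ Im z S`,
hence `|A_τ| ≥ |τ| |Im z| S`, while `|B_τ| ≤ |τ| S`.
-/

open Matrix Unitary

namespace Matrix

variable {n : Type*} [Fintype n] [DecidableEq n]

theorem inv_map_diagonal {K F : Type*} [Field K] [FunLike F (Matrix n n K) (Matrix n n K)]
    [MonoidHomClass F (Matrix n n K) (Matrix n n K)] (φ : F) {c : n → K} (hc : ∀ i, c i ≠ 0) :
    (φ (diagonal c))⁻¹ = φ (diagonal c⁻¹) := by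
  refine inv_eq_right_inv ?_
  rw [← map_mul, diagonal_mul_diagonal]
  simp [mul_inv_cancel₀ (hc _)]

theorem star_dotProduct_conjStarAlgAut_mulVec {R : Type*} [CommRing R] [StarRing R]
    (U : unitary (Matrix n n R)) (M : Matrix n n R) (x : n → R) :
    star x ⬝ᵥ conjStarAlgAut R _ U M *ᵥ x
      = star ((star U : Matrix n n R) *ᵥ x) ⬝ᵥ M *ᵥ ((star U : Matrix n n R) *ᵥ x) := by
  rw [conjStarAlgAut_apply, ← mulVec_mulVec, ← mulVec_mulVec, dotProduct_mulVec, star_mulVec,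
    star_eq_conjTranspose, conjTranspose_conjTranspose]

theorem star_dotProduct_diagonal_mulVec (v g : n → ℂ) :
    star v ⬝ᵥ diagonal g *ᵥ v = ∑ j, (Complex.normSq (v j) : ℂ) * g j := by
  refine Finset.sum_congr rfl fun j _ => ?_
  rw [mulVec_diagonal, Pi.star_apply, Complex.star_def, Complex.normSq_eq_conj_mul_self]
  ring

namespace IsHermitian

variable {𝕜 : Type*} [RCLike 𝕜] {H : Matrix n n 𝕜} (hH : H.IsHermitian)

theorem sub_smul_one_eq_conjStarAlgAut (z : 𝕜) :
    H - z • 1 = conjStarAlgAut 𝕜 _ hH.eigenvectorUnitary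
      (diagonal fun i => (hH.eigenvalues i : 𝕜) - z) := by
  have hdiag : (diagonal fun i => (hH.eigenvalues i : 𝕜) - z)
      = diagonal (RCLike.ofReal ∘ hH.eigenvalues) - z • 1 := by
    rw [smul_one_eq_diagonal, diagonal_sub]
    rfl
  conv_lhs => rw [hH.spectral_theorem]
  rw [hdiag, map_sub, map_smul, map_one]

theorem inv_sub_smul_one_eq_conjStarAlgAut {z : 𝕜} (hz : ∀ i, (hH.eigenvalues i : 𝕜) ≠ z) :
    (H - z • 1)⁻¹ = conjStarAlgAut 𝕜 _ hH.eigenvectorUnitary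
      (diagonal fun i => ((hH.eigenvalues i : 𝕜) - z)⁻¹) := by
  rw [hH.sub_smul_one_eq_conjStarAlgAut, inv_map_diagonal _ fun i => sub_ne_zero.2 (hz i)]
  rfl

end IsHermitian

end Matrix

namespace Complex

variable {ι : Type*} [Fintype ι]

theorem im_sum_ofReal_mul_inv_ofReal_sub (w μ : ι → ℝ) (z : ℂ) :
    (∑ j, (w j : ℂ) * ((μ j : ℂ) - z)⁻¹).im = z.im * ∑ j, w j / normSq ((μ j : ℂ) - z) := by
  simp only [im_sum, im_ofReal_mul, inv_im, sub_im, ofReal_im, Finset.mul_sum]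
  refine Finset.sum_congr rfl fun j _ => ?_
  ring

theorem norm_sum_ofReal_mul_inv_sq_le {w : ι → ℝ} (hw : 0 ≤ w) (c : ι → ℂ) :
    ‖∑ j, (w j : ℂ) * (c j)⁻¹ ^ 2‖ ≤ ∑ j, w j / normSq (c j) := by
  refine (norm_sum_le _ _).trans_eq (Finset.sum_congr rfl fun j _ => ?_)
  rw [norm_mul, norm_pow, norm_inv, norm_real, Real.norm_of_nonneg (hw j), inv_pow,
    Complex.sq_norm, div_eq_mul_inv]

theorem norm_ofReal_mul_div_one_add_ofReal_mul_le {a b : ℂ} {τ t S : ℝ} (ht : t ≠ 0)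
    (hb : ‖b‖ ≤ S) (ha : a.im = t * S) :
    ‖τ * b / (1 + τ * a)‖ ≤ 1 / |t| := by
  have hS : 0 ≤ S := (norm_nonneg b).trans hb
  have hden : |τ| * |t| * S ≤ ‖1 + τ * a‖ := by
    calc |τ| * |t| * S = |(1 + τ * a).im| := by
          rw [add_im, one_im, zero_add, im_ofReal_mul, ha, abs_mul, abs_mul, abs_of_nonneg hS,
            mul_assoc]
      _ ≤ ‖1 + τ * a‖ := abs_im_le_norm _
  rcases (norm_nonneg (1 + τ * a)).eq_or_lt with hzero | hpos
  · rw [norm_div, ← hzero, div_zero]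
    positivity
  rw [norm_div, div_le_div_iff₀ hpos (abs_pos.2 ht), one_mul, norm_mul, norm_real,
    Real.norm_eq_abs]
  calc |τ| * ‖b‖ * |t| ≤ |τ| * S * |t| := by gcongr
    _ = |τ| * |t| * S := by ring
    _ ≤ ‖1 + τ * a‖ := hden

theorem norm_mul_sum_inv_sq_div_one_add_mul_sum_inv_le {w : ι → ℝ} (hw : 0 ≤ w) (μ : ι → ℝ)
    (τ : ℝ) {z : ℂ} (hz : z.im ≠ 0) :
    ‖τ * (∑ j, (w j : ℂ) * ((μ j : ℂ) - z)⁻¹ ^ 2) /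
        (1 + τ * ∑ j, (w j : ℂ) * ((μ j : ℂ) - z)⁻¹)‖ ≤ 1 / |z.im| :=
  norm_ofReal_mul_div_one_add_ofReal_mul_le hz (norm_sum_ofReal_mul_inv_sq_le hw _)
    (im_sum_ofReal_mul_inv_ofReal_sub w μ z)

end Complex

/-- with `A_τ = 1 + τ(G⁰Y,Y)` and `B_τ = τ((G⁰)²Y,Y)` for a real symmetric
matrix `A` and `G⁰ = (A - zI)⁻¹`, one has `|B_τ / A_τ| ≤ 1/|Im z|`. -/
theorem stmt3 (n : ℕ) (A : Matrix (Fin n) (Fin n) ℝ) (hA : A.IsSymm)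
    (Y : Fin n → ℝ) (τ : ℝ) (z : ℂ) (hz : z.im ≠ 0) :
    Norm.norm
      (((τ : ℂ) * ((fun i => (Y i : ℂ)) ⬝ᵥ
          (((A.map Complex.ofReal - z • 1)⁻¹ * (A.map Complex.ofReal - z • 1)⁻¹) *ᵥ
            (fun i => (Y i : ℂ))))) /
        (1 + (τ : ℂ) * ((fun i => (Y i : ℂ)) ⬝ᵥ
          ((A.map Complex.ofReal - z • 1)⁻¹ *ᵥ (fun i => (Y i : ℂ)))))) ≤
      1 / |z.im| := by
  have hH : (A.map Complex.ofReal).IsHermitian :=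
    (isHermitian_iff_isSymm.2 hA).map _ fun x => (Complex.conj_ofReal x).symm
  have heig : ∀ i, (hH.eigenvalues i : ℂ) ≠ z := fun i h =>
    hz (by simpa using congrArg Complex.im h.symm)
  set U := hH.eigenvectorUnitary
  set Yc : Fin n → ℂ := fun i => (Y i : ℂ)
  have hY : star Yc = Yc := funext fun i => Complex.conj_ofReal (Y i)
  have hform (g : Fin n → ℂ) : Yc ⬝ᵥ conjStarAlgAut ℂ _ U (diagonal g) *ᵥ Yc
      = ∑ j, (Complex.normSq (((star U : Matrix (Fin n) (Fin n) ℂ) *ᵥ Yc) j) : ℂ) * g j := by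
    rw [← star_dotProduct_diagonal_mulVec, ← star_dotProduct_conjStarAlgAut_mulVec, hY]
  rw [hH.inv_sub_smul_one_eq_conjStarAlgAut heig, ← map_mul, diagonal_mul_diagonal, hform, hform]
  simp only [← sq]
  exact Complex.norm_mul_sum_inv_sq_div_one_add_mul_sum_inv_le
    (fun j => Complex.normSq_nonneg _) _ τ hz
end

section
/- Let τ ∈ ℝ and z = μ + iη with η > 0. Let m be a finite nonnegative measure on ℝ with total mass m(ℝ), and let F(z) = ∫ (λ-z)⁻¹ dm(λ). Then |1 + τF(z)| ≥ min(1/2, η/(4|τ| m(ℝ))). Specifically, either |F(z)| ≤ 1/(2|τ|), in which case |1+τF(z)| ≥ 1/2; or |F(z)| > 1/(2|τ|), in which case |1+τF(z)| ≥ |τ| η ∫|λ-z|⁻² dm(λ) ≥ η/(4|τ| m(ℝ)). -/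
open MeasureTheory

/-- lower bound on `|1 + τ F(z)|` for the Stieltjes transform `F` of a
finite nonnegative measure `m`, `z = μ + iη`, `η ≠ 0`, `τ ≠ 0`:
either `|F(z)| ≤ 1/(2|τ|)` and then `|1+τF(z)| ≥ 1/2`, or `|F(z)| > 1/(2|τ|)` and then
`|1+τF(z)| ≥ |τ||η| ∫|λ-z|⁻² dm ≥ |η|/(4|τ| m(ℝ))`. -/
theorem stmt13 (m : Measure ℝ) [IsFiniteMeasure m] (τ : ℝ) (hτ : τ ≠ 0)
    (μ0 η : ℝ) (hη : η ≠ 0) :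
    (‖∫ l, (((l : ℂ)) - (μ0 + η * Complex.I))⁻¹ ∂m‖ ≤ 1 / (2 * |τ|) →
      (1 : ℝ) / 2 ≤ ‖
        1 + τ * ∫ l, (((l : ℂ)) - (μ0 + η * Complex.I))⁻¹ ∂m‖) ∧
    (1 / (2 * |τ|) < ‖∫ l, (((l : ℂ)) - (μ0 + η * Complex.I))⁻¹ ∂m‖ →
      (|τ| * |η| * ∫ l, ((l - μ0) ^ 2 + η ^ 2)⁻¹ ∂m) ≤ ‖
          1 + τ * ∫ l, (((l : ℂ)) - (μ0 + η * Complex.I))⁻¹ ∂m‖ ∧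
      |η| / (4 * |τ| * (m Set.univ).toReal) ≤
        |τ| * |η| * ∫ l, ((l - μ0) ^ 2 + η ^ 2)⁻¹ ∂m) := by
  have hτ' : 0 < |τ| := abs_pos.mpr hτ
  have hη' : 0 < |η| := abs_pos.mpr hη
  set z : ℂ := (μ0 : ℂ) + η * Complex.I with hz
  have hzim : ∀ l : ℝ, ((l : ℂ) - z).im = -η := by
    intro l; simp [hz]
  have hzre : ∀ l : ℝ, ((l : ℂ) - z).re = l - μ0 := by
    intro l; simp [hz]
  have hd : ∀ l : ℝ, 0 < (l - μ0) ^ 2 + η ^ 2 := by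
    intro l; positivity
  have hzne : ∀ l : ℝ, (l : ℂ) - z ≠ 0 := by
    intro l h
    have := hzim l
    rw [h] at this
    simp at this
    exact hη this
  have hnsq : ∀ l : ℝ, Complex.normSq ((l : ℂ) - z) = (l - μ0) ^ 2 + η ^ 2 := by
    intro l
    rw [Complex.normSq_apply, hzre, hzim]
    ring
  have hnorm : ∀ l : ℝ, ‖(l : ℂ) - z‖ = Real.sqrt ((l - μ0) ^ 2 + η ^ 2) := by
    intro l; rw [Complex.norm_def, hnsq]
  have hsqrt_ge : ∀ l : ℝ, |η| ≤ Real.sqrt ((l - μ0) ^ 2 + η ^ 2) := by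
    intro l
    rw [← Real.sqrt_sq_eq_abs]
    exact Real.sqrt_le_sqrt (by nlinarith [sq_nonneg (l - μ0)])
  have hcont : Continuous fun l : ℝ => ((l : ℂ) - z)⁻¹ :=
    (Complex.continuous_ofReal.sub continuous_const).inv₀ hzne
  have hcont2 : Continuous fun l : ℝ => ((l - μ0) ^ 2 + η ^ 2)⁻¹ :=
    (((continuous_id.sub continuous_const).pow 2).add continuous_const).inv₀
      (fun l => (hd l).ne')
  have hint1 : Integrable (fun l : ℝ => ((l : ℂ) - z)⁻¹) m := by
    refine ⟨hcont.aestronglyMeasurable, ?_⟩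
    apply HasFiniteIntegral.of_bounded (C := |η|⁻¹)
    filter_upwards with l
    rw [norm_inv, hnorm]
    exact inv_anti₀ hη' (hsqrt_ge l)
  have hint2 : Integrable (fun l : ℝ => ((l - μ0) ^ 2 + η ^ 2)⁻¹) m := by
    refine ⟨hcont2.aestronglyMeasurable, ?_⟩
    apply HasFiniteIntegral.of_bounded (C := (η ^ 2)⁻¹)
    filter_upwards with l
    rw [Real.norm_eq_abs, abs_of_pos (inv_pos.mpr (hd l))]
    exact inv_anti₀ (by positivity) (by nlinarith [sq_nonneg (l - μ0)])
  set F := ∫ l, ((l : ℂ) - z)⁻¹ ∂m with hF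
  set I2 := ∫ l, ((l - μ0) ^ 2 + η ^ 2)⁻¹ ∂m with hI2
  have hI2nn : 0 ≤ I2 := integral_nonneg fun l => le_of_lt (inv_pos.mpr (hd l))
  have hFim : F.im = η * I2 := by
    have h1 : ∫ l, (((l : ℂ) - z)⁻¹).im ∂m = F.im := by
      simpa using Complex.imCLM.integral_comp_comm hint1
    rw [← h1]
    rw [show (fun l : ℝ => (((l : ℂ) - z)⁻¹).im)
        = fun l : ℝ => η * ((l - μ0) ^ 2 + η ^ 2)⁻¹ from ?_]
    · exact integral_const_mul η _
    · funext l
      rw [Complex.inv_im, hnsq, hzim]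
      field_simp
  constructor
  · intro h1
    have h2 : ‖(τ : ℂ) * F‖ ≤ 1 / 2 := by
      rw [norm_mul, Complex.norm_real, Real.norm_eq_abs]
      calc |τ| * ‖F‖ ≤ |τ| * (1 / (2 * |τ|)) :=
            mul_le_mul_of_nonneg_left h1 (le_of_lt hτ')
        _ = 1 / 2 := by field_simp
    have h3 : (1 : ℝ) = ‖(1 + (τ : ℂ) * F) - (τ : ℂ) * F‖ := by
      simp
    calc (1 : ℝ) / 2 = 1 - 1 / 2 := by norm_num
      _ ≤ ‖(1 + (τ : ℂ) * F) - (τ : ℂ) * F‖ - ‖(τ : ℂ) * F‖ := by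
          rw [← h3]; linarith
      _ ≤ ‖1 + (τ : ℂ) * F‖ := by
          have h5 := norm_sub_le (1 + (τ : ℂ) * F) ((τ : ℂ) * F)
          linarith
  · intro h1
    have habsim : |τ| * |η| * I2 ≤ ‖1 + (τ : ℂ) * F‖ := by
      have h2 := Complex.abs_im_le_norm (1 + (τ : ℂ) * F)
      have h3 : (1 + (τ : ℂ) * F).im = τ * F.im := by simp
      rw [h3, hFim] at h2
      calc |τ| * |η| * I2 = |τ * (η * I2)| := by
            rw [abs_mul, abs_mul, abs_of_nonneg hI2nn]; ring
        _ ≤ ‖1 + (τ : ℂ) * F‖ := h2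
    refine ⟨habsim, ?_⟩
    set M := (m Set.univ).toReal with hM
    have hMnn : 0 ≤ M := ENNReal.toReal_nonneg
    set g : ℝ → ℝ := fun l => Real.sqrt (((l - μ0) ^ 2 + η ^ 2)⁻¹) with hg
    have hgcont : Continuous g := hcont2.sqrt
    have hgnn : ∀ l, 0 ≤ g l := fun l => Real.sqrt_nonneg _
    have hgsq : ∀ l, g l ^ (2 : ℝ) = ((l - μ0) ^ 2 + η ^ 2)⁻¹ := by
      intro l
      rw [show ((2 : ℝ) : ℝ) = ((2 : ℕ) : ℝ) by norm_num, Real.rpow_natCast]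
      exact Real.sq_sqrt (le_of_lt (inv_pos.mpr (hd l)))
    have hgbound : ∀ l, ‖g l‖ ≤ |η|⁻¹ := by
      intro l
      rw [Real.norm_eq_abs, abs_of_nonneg (hgnn l), hg]
      have hb : ((l - μ0) ^ 2 + η ^ 2)⁻¹ ≤ (|η|⁻¹) ^ 2 := by
        rw [inv_pow, sq_abs]
        exact inv_anti₀ (by positivity) (by nlinarith [sq_nonneg (l - μ0)])
      calc Real.sqrt (((l - μ0) ^ 2 + η ^ 2)⁻¹) ≤ Real.sqrt ((|η|⁻¹) ^ 2) :=
            Real.sqrt_le_sqrt hb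
        _ = |η|⁻¹ := Real.sqrt_sq (by positivity)
    have hgmem : MemLp g (ENNReal.ofReal 2) m :=
      MemLp.of_bound hgcont.aestronglyMeasurable |η|⁻¹ (Filter.Eventually.of_forall hgbound)
    have honemem : MemLp (fun _ : ℝ => (1 : ℝ)) (ENNReal.ofReal 2) m := memLp_const 1
    have hconj : Real.HolderConjugate 2 2 := Real.HolderConjugate.two_two
    have hCS := integral_mul_le_Lp_mul_Lq_of_nonneg hconj
      (Filter.Eventually.of_forall hgnn)
      (Filter.Eventually.of_forall fun _ => zero_le_one) hgmem honemem
    simp only [mul_one, Real.one_rpow] at hCS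
    have hCS2 : ∫ l, g l ∂m ≤ (∫ l, g l ^ (2:ℝ) ∂m) ^ ((1:ℝ)/2) * M ^ ((1:ℝ)/2) := by
      convert hCS using 3
      rw [integral_const, smul_eq_mul, mul_one]
      rfl
    have hgI2 : ∫ l, g l ^ (2:ℝ) ∂m = I2 := by
      refine integral_congr_ae (Filter.Eventually.of_forall fun l => ?_)
      exact hgsq l
    rw [hgI2] at hCS2
    have hFle : ‖F‖ ≤ ∫ l, g l ∂m := by
      calc ‖F‖ ≤ ∫ l, ‖((l : ℂ) - z)⁻¹‖ ∂m := by
            simpa using norm_integral_le_integral_norm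
              (fun l : ℝ => ((l : ℂ) - z)⁻¹) (μ := m)
        _ = ∫ l, g l ∂m := by
            refine integral_congr_ae (Filter.Eventually.of_forall fun l => ?_)
            show ‖((l : ℂ) - z)⁻¹‖ = g l
            simp only [norm_inv, hnorm, hg, Real.sqrt_inv]
    have hkey : 1 / (2 * |τ|) < I2 ^ ((1:ℝ)/2) * M ^ ((1:ℝ)/2) :=
      lt_of_lt_of_le h1 (le_trans hFle hCS2)
    have hsq : I2 ^ ((1:ℝ)/2) * M ^ ((1:ℝ)/2) = Real.sqrt I2 * Real.sqrt M := by
      rw [Real.sqrt_eq_rpow, Real.sqrt_eq_rpow]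
    rw [hsq] at hkey
    have hMpos : 0 < M := by
      rcases eq_or_lt_of_le hMnn with h | h
      · exfalso
        rw [← h, Real.sqrt_zero, mul_zero] at hkey
        have : 0 < 1 / (2 * |τ|) := by positivity
        linarith
      · exact h
    have hsqkey : (1 / (2 * |τ|)) ^ 2 < I2 * M := by
      have h0 : 0 ≤ 1 / (2 * |τ|) := by positivity
      calc (1 / (2 * |τ|)) ^ 2 = (1 / (2 * |τ|)) * (1 / (2 * |τ|)) := sq _
        _ < (Real.sqrt I2 * Real.sqrt M) * (Real.sqrt I2 * Real.sqrt M) := by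
            nlinarith [Real.sqrt_nonneg I2, Real.sqrt_nonneg M]
        _ = (Real.sqrt I2 * Real.sqrt I2) * (Real.sqrt M * Real.sqrt M) := by ring
        _ = I2 * M := by rw [Real.mul_self_sqrt hI2nn, Real.mul_self_sqrt hMnn]
    rw [div_le_iff₀ (by positivity)]
    have h4 : 1 / (4 * τ ^ 2) < I2 * M := by
      have he : (1 / (2 * |τ|)) ^ 2 = 1 / (4 * τ ^ 2) := by
        rw [div_pow, mul_pow, sq_abs]; norm_num
      rw [he] at hsqkey
      exact hsqkey
    have hτsq : |τ| * |τ| = τ ^ 2 := by rw [← abs_mul, abs_mul_self]; ring_nf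
    have h5 : (1 : ℝ) < I2 * M * (4 * τ ^ 2) := by
      rw [div_lt_iff₀ (by positivity)] at h4
      linarith
    have h6 : |τ| * |η| * I2 * (4 * |τ| * M) = |η| * (I2 * M * (4 * τ ^ 2)) := by
      rw [← hτsq]; ring
    rw [h6]
    calc |η| = |η| * 1 := (mul_one _).symm
      _ ≤ |η| * (I2 * M * (4 * τ ^ 2)) :=
          le_of_lt (mul_lt_mul_of_pos_left h5 hη')
end

section
/- Let M = ∑_{α=1}^m τ_α Y_α Y_αᵀ be an N×N real symmetric matrix with Y_α ∈ ℝᴺ, τ_α ∈ ℝ, G(z) = (M - zI)⁻¹, and g(z) = N⁻¹ Tr G(z). Then for z ∈ ℂ \ ℝ: z g(z) = -1 + m/N - N⁻¹ ∑_{α=1}^m (1 + τ_α (G^α(z) Y_α, Y_α))⁻¹, where G^α(z) = (M - τ_α Y_α Y_αᵀ - zI)⁻¹. -/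
open Matrix

/-! The resolvent identity `(M - z) G = 1` gives `z Tr G = Tr (M G) - N`. Writing
`M = ∑ τ_α Y_α Y_αᵀ`, the trace `Tr (M G)` splits into the scalars `τ_α (G Y_α, Y_α)`, and the
Sherman–Morrison formula expresses each of them through the resolvent `G^α` of the matrix with the
`α`-th summand removed: `τ_α (G Y_α, Y_α) = 1 - (1 + τ_α (G^α Y_α, Y_α))⁻¹`. Off the real axis all
these resolvents exist, since the matrices involved are real symmetric. -/

section Resolvent

variable {K n : Type*} [Field K] [Fintype n]

theorem Matrix.trace_smul_vecMulVec_mul (t : K) (u w : n → K) (C : Matrix n n K) :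
    (t • vecMulVec u w * C).trace = t * (w ⬝ᵥ (C *ᵥ u)) := by
  rw [smul_mul, trace_smul, trace_mul_comm, mul_vecMulVec, trace_vecMulVec, dotProduct_comm,
    smul_eq_mul]

variable [DecidableEq n]

theorem Matrix.mul_dotProduct_inv_add_smul_vecMulVec_mulVec {B : Matrix n n K}
    (hB : IsUnit B.det) (t : K) (u w : n → K) (hC : IsUnit (B + t • vecMulVec u w).det) :
    t * (w ⬝ᵥ ((B + t • vecMulVec u w)⁻¹ *ᵥ u)) = 1 - (1 + t * (w ⬝ᵥ (B⁻¹ *ᵥ u)))⁻¹ := by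
  set x := (B + t • vecMulVec u w)⁻¹ *ᵥ u
  set q := t * (w ⬝ᵥ (B⁻¹ *ᵥ u))
  have hCx : (B + t • vecMulVec u w) *ᵥ x = u := by
    rw [mulVec_mulVec, mul_nonsing_inv _ hC, one_mulVec]
  have hBx : B *ᵥ x = (1 - t * (w ⬝ᵥ x)) • u := by
    rw [add_mulVec, smul_mulVec, vecMulVec_mulVec, op_smul_eq_smul] at hCx
    linear_combination (norm := module) hCx
  have hx : x = (1 - t * (w ⬝ᵥ x)) • (B⁻¹ *ᵥ u) := by
    rw [← mulVec_smul, ← hBx, mulVec_mulVec, nonsing_inv_mul _ hB, one_mulVec]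
  have hs : t * (w ⬝ᵥ x) = (1 - t * (w ⬝ᵥ x)) * q := by
    conv_lhs => rw [hx]
    rw [dotProduct_smul, smul_eq_mul]
    ring
  have hq : 1 + q ≠ 0 := by
    intro h
    rw [show q = -1 by linear_combination h] at hs
    exact one_ne_zero (by linear_combination hs : (1 : K) = 0)
  field_simp
  linear_combination hs

theorem Matrix.mul_trace_inv_sub_smul_one {M : Matrix n n K} {z : K}
    (h : IsUnit (M - z • (1 : Matrix n n K)).det) :
    z * (M - z • (1 : Matrix n n K))⁻¹.trace
      = (M * (M - z • (1 : Matrix n n K))⁻¹).trace - Fintype.card n := by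
  have hG := congrArg trace (mul_nonsing_inv _ h)
  rw [sub_mul, smul_mul, one_mul, trace_sub, trace_smul, smul_eq_mul, trace_one] at hG
  linear_combination -hG

theorem Matrix.mul_trace_inv_sum_smul_vecMulVec_sub_smul_one {ι : Type*} [Fintype ι]
    (c : ι → K) (u w : ι → n → K) (z : K)
    (hG : IsUnit (∑ α, c α • vecMulVec (u α) (w α) - z • (1 : Matrix n n K)).det)
    (hGα : ∀ α, IsUnit (∑ β, c β • vecMulVec (u β) (w β) - c α • vecMulVec (u α) (w α)
      - z • (1 : Matrix n n K)).det) :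
    z * (∑ α, c α • vecMulVec (u α) (w α) - z • (1 : Matrix n n K))⁻¹.trace =
      Fintype.card ι - Fintype.card n - ∑ α, (1 + c α * (w α ⬝ᵥ
        ((∑ β, c β • vecMulVec (u β) (w β) - c α • vecMulVec (u α) (w α)
          - z • (1 : Matrix n n K))⁻¹ *ᵥ u α)))⁻¹ := by
  set M := ∑ α, c α • vecMulVec (u α) (w α) with hM
  have hsplit (α : ι) :
      M - c α • vecMulVec (u α) (w α) - z • 1 + c α • vecMulVec (u α) (w α) = M - z • 1 := by
    abel
  have hterm (α : ι) := mul_dotProduct_inv_add_smul_vecMulVec_mulVec (hGα α) (c α) (u α) (w α)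
    (by rwa [hsplit])
  rw [mul_trace_inv_sub_smul_one hG, hM, Finset.sum_mul, trace_sum]
  simp only [trace_smul_vecMulVec_mul, ← hM, hsplit] at hterm ⊢
  rw [Finset.sum_congr rfl fun α _ => hterm α, Finset.sum_sub_distrib, Finset.sum_const,
    Finset.card_univ, nsmul_one, sub_right_comm]

end Resolvent

theorem Matrix.IsHermitian.isUnit_det_sub_smul_one {n : Type*} [Fintype n] [DecidableEq n]
    {A : Matrix n n ℂ} (hA : A.IsHermitian) {z : ℂ} (hz : z.im ≠ 0) :
    IsUnit (A - z • (1 : Matrix n n ℂ)).det := by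
  have hzA : z ∉ spectrum ℂ A := by
    rw [hA.spectrum_eq_image_range]
    rintro ⟨r, -, rfl⟩
    exact hz (by simp)
  rw [spectrum.notMem_iff, Algebra.algebraMap_eq_smul_one, ← neg_sub, IsUnit.neg_iff] at hzA
  exact (isUnit_iff_isUnit_det _).1 hzA

theorem Matrix.IsSymm.isHermitian_map_ofReal {n : Type*} {S : Matrix n n ℝ} (hS : S.IsSymm) :
    (S.map Complex.ofReal).IsHermitian :=
  (isHermitian_iff_isSymm.2 hS).map _ fun x => (Complex.conj_ofReal x).symm

theorem Matrix.isSymm_sum_smul_vecMulVec_self {n ι : Type*} (s : Finset ι) (τ : ι → ℝ)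
    (Y : ι → n → ℝ) :
    (∑ α ∈ s, τ α • vecMulVec (Y α) (Y α)).IsSymm := by
  simp only [IsSymm, transpose_sum, transpose_smul, transpose_vecMulVec]

theorem Matrix.map_ofReal_smul_vecMulVec {n : Type*} (t : ℝ) (v : n → ℝ) :
    (t • vecMulVec v v).map Complex.ofReal
      = (t : ℂ) • vecMulVec (fun i => (v i : ℂ)) (fun i => (v i : ℂ)) := by
  ext i j
  simp [vecMulVec_apply]

/-- for `M = ∑_α τ_α Y_α Y_αᵀ` and `g(z) = N⁻¹ Tr (M - zI)⁻¹`,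
`z g(z) = -1 + m/N - N⁻¹ ∑_α (1 + τ_α (G^α(z) Y_α, Y_α))⁻¹`, where
`G^α(z) = (M - τ_α Y_α Y_αᵀ - zI)⁻¹`. -/
theorem stmt18 (N m : ℕ) (hN : 0 < N) (τ : Fin m → ℝ) (Y : Fin m → Fin N → ℝ)
    (z : ℂ) (hz : z.im ≠ 0) :
    z * ((N : ℂ)⁻¹ *
        ((((∑ α, τ α • vecMulVec (Y α) (Y α)).map Complex.ofReal)
            - z • (1 : Matrix (Fin N) (Fin N) ℂ))⁻¹).trace) =
      -1 + (m : ℂ) / N - (N : ℂ)⁻¹ * ∑ α,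
        (1 + (τ α : ℂ) * ((fun i => (Y α i : ℂ)) ⬝ᵥ
          (((((∑ β, τ β • vecMulVec (Y β) (Y β)).map Complex.ofReal)
              - (τ α : ℂ) • vecMulVec (fun i => (Y α i : ℂ)) (fun i => (Y α i : ℂ))
              - z • (1 : Matrix (Fin N) (Fin N) ℂ))⁻¹) *ᵥ (fun i => (Y α i : ℂ)))))⁻¹ := by
  have hM := (isSymm_sum_smul_vecMulVec_self Finset.univ τ Y).isHermitian_map_ofReal
  have hMα (α : Fin m) := hM.sub (isSymm_sum_smul_vecMulVec_self {α} τ Y).isHermitian_map_ofReal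
  have hmap : (∑ α, τ α • vecMulVec (Y α) (Y α)).map Complex.ofReal
      = ∑ α, (τ α : ℂ) • vecMulVec (fun i => (Y α i : ℂ)) (fun i => (Y α i : ℂ)) := by
    ext i j
    simp [Matrix.sum_apply, vecMulVec_apply]
  simp only [Finset.sum_singleton, map_ofReal_smul_vecMulVec, hmap] at hM hMα ⊢
  rw [mul_left_comm, mul_trace_inv_sum_smul_vecMulVec_sub_smul_one _ _ _ _
    (hM.isUnit_det_sub_smul_one hz) fun α => (hMα α).isUnit_det_sub_smul_one hz]
  have hN' : (N : ℂ) ≠ 0 := by exact_mod_cast hN.ne'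
  simp only [Fintype.card_fin]
  field_simp
  ring
end
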